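/- Let g, ρ, γ be real numbers with 0 < g ≤ ρ < γ ≤ 1, and let z be a complex number with |z| = 1. Set w = γz, N(w) = w(w − g²) + ρg(w − 1) and D(w) = w(w − g²) − ρg(w − 1). Then D(w) ≠ 0 and the real part of N(w)/D(w) is strictly positive. -/

import Mathlib

/-!
Write `N = P + Q` and `D = P - Q` with `P = w (w - g²)` and `Q = ρ g (w - 1)`. Then
`Re (N / D) = (|P|² - |Q|²) / |D|²`, so everything reduces to `ρ g |w - 1| < |w| |w - g²|`
on the circle `|w| = γ`. Squared, both sides are affine in `Re z`, and since `ρ < γ` the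
difference is smallest at `z = 1`, where it factors as
`(γ (γ - g²) - ρ g (1 - γ)) (γ (γ - g²) + ρ g (1 - γ)) > 0`.
-/

namespace Complex

theorem sub_ne_zero_of_norm_lt {P Q : ℂ} (h : ‖Q‖ < ‖P‖) : P - Q ≠ 0 :=
  sub_ne_zero.mpr fun hPQ => (hPQ ▸ h).false

theorem re_add_div_sub_pos_of_norm_lt {P Q : ℂ} (h : ‖Q‖ < ‖P‖) :
    0 < ((P + Q) / (P - Q)).re := by
  have hnormSq : normSq Q < normSq P := by
    rw [normSq_eq_norm_sq, normSq_eq_norm_sq]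
    exact pow_lt_pow_left₀ h (norm_nonneg _) two_ne_zero
  have hnum : (P + Q).re * (P - Q).re + (P + Q).im * (P - Q).im = normSq P - normSq Q := by
    simp only [add_re, add_im, sub_re, sub_im, normSq_apply]
    ring
  rw [div_re, ← add_div, hnum]
  exact div_pos (sub_pos.mpr hnormSq) (normSq_pos.mpr (sub_ne_zero_of_norm_lt h))

theorem sq_norm_ofReal_mul_sub_ofReal {z : ℂ} (hz : ‖z‖ = 1) (r c : ℝ) :
    ‖(r : ℂ) * z - c‖ ^ 2 = r ^ 2 - 2 * r * c * z.re + c ^ 2 := by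
  have hunit : z.re ^ 2 + z.im ^ 2 = 1 := by
    have := normSq_eq_norm_sq z
    rw [hz, normSq_apply] at this
    linear_combination this
  rw [← normSq_eq_norm_sq, normSq_apply]
  simp only [sub_re, sub_im, mul_re, mul_im, ofReal_re, ofReal_im]
  linear_combination r ^ 2 * hunit

end Complex

section TransferFunction

variable {g ρ γ : ℝ}

theorem mul_one_sub_lt_mul_sub_sq (hg : 0 < g) (hgρ : g ≤ ρ) (hργ : ρ < γ) (hγ : γ ≤ 1) :
    ρ * g * (1 - γ) < γ * (γ - g ^ 2) := by
  have hρg : ρ * g * (1 - γ) ≤ γ * g * (1 - γ) :=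
    mul_le_mul_of_nonneg_right (by gcongr) (sub_nonneg.mpr hγ)
  nlinarith [mul_pos hg (sub_pos.mpr (hgρ.trans_lt hργ))]

/-- The squared inequality `ρ² g² |γ z - 1|² < γ² |γ z - g²|²` with `a = Re z`. -/
theorem sq_mul_sub_lt_sq_mul_sub {a : ℝ} (hg : 0 < g) (hgρ : g ≤ ρ) (hργ : ρ < γ)
    (hγ : γ ≤ 1) (ha : a ≤ 1) :
    ρ ^ 2 * g ^ 2 * (γ ^ 2 - 2 * γ * a + 1) < γ ^ 2 * (γ ^ 2 - 2 * γ * g ^ 2 * a + g ^ 4) := by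
  have hρ : 0 < ρ := hg.trans_le hgρ
  have hat_one : (ρ * g * (1 - γ)) ^ 2 < (γ * (γ - g ^ 2)) ^ 2 := by
    have := mul_one_sub_lt_mul_sub_sq hg hgρ hργ hγ
    have : 0 ≤ ρ * g * (1 - γ) := by
      have := sub_nonneg.mpr hγ
      positivity
    gcongr
  have hslope : 0 ≤ γ * g ^ 2 * (γ ^ 2 - ρ ^ 2) * (1 - a) := by
    have := sub_nonneg.mpr ha
    have : 0 ≤ γ ^ 2 - ρ ^ 2 := by nlinarith
    have := hρ.trans hργ
    positivity
  nlinarith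

end TransferFunction

theorem transfer_function_strictly_positive_real (g ρ γ : ℝ) (hg : 0 < g) (hgρ : g ≤ ρ)
    (hργ : ρ < γ) (hγ : γ ≤ 1) (z : ℂ) (hz : ‖z‖ = 1) :
    let w : ℂ := (γ : ℂ) * z
    let N : ℂ := w * (w - (g : ℂ) ^ 2) + (ρ : ℂ) * (g : ℂ) * (w - 1)
    let D : ℂ := w * (w - (g : ℂ) ^ 2) - (ρ : ℂ) * (g : ℂ) * (w - 1)
    D ≠ 0 ∧ 0 < (N / D).re := by
  intro w N D
  have hnorm : ‖(ρ : ℂ) * g * (w - 1)‖ < ‖w * (w - (g : ℂ) ^ 2)‖ := by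
    have hw_sub : ‖w - (g : ℂ) ^ 2‖ ^ 2 = γ ^ 2 - 2 * γ * g ^ 2 * z.re + g ^ 4 := by
      have := Complex.sq_norm_ofReal_mul_sub_ofReal hz γ (g ^ 2)
      push_cast at this
      linear_combination this
    have hw_one : ‖w - 1‖ ^ 2 = γ ^ 2 - 2 * γ * z.re + 1 := by
      have := Complex.sq_norm_ofReal_mul_sub_ofReal hz γ 1
      push_cast at this
      linear_combination this
    refine lt_of_pow_lt_pow_left₀ 2 (norm_nonneg _) ?_
    simp only [norm_mul, mul_pow, Complex.norm_real, Real.norm_eq_abs, sq_abs, hw_sub, hw_one,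
      w, hz, mul_one]
    exact sq_mul_sub_lt_sq_mul_sub hg hgρ hργ hγ (z.re_le_norm.trans hz.le)
  exact ⟨Complex.sub_ne_zero_of_norm_lt hnorm, Complex.re_add_div_sub_pos_of_norm_lt hnorm⟩
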